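/- arXiv:0707.0698 — 2 statements merged into one kernel-verified Lean document; each statement's English description precedes it below -/
import Mathlib

section
/- If I and J are proper pseudoprime ideals of 𝕂̃, then I + J equals I, or J, or all of 𝕂̃. -/
noncomputable section

set_option maxHeartbeats 1000000
set_option synthInstance.maxHeartbeats 400000

open scoped Classical

/-- The index set `(0,1) ⊆ ℝ` of the nets. -/
abbrev Eps : Type := Set.Ioo (0:ℝ) 1

variable (K : Type) [RCLike K]

/-- A net `(x_ε)_{ε ∈ (0,1)}` is moderate if `|x_ε| ≤ ε^a` for some `a ∈ ℝ`,
for all sufficiently small `ε`. -/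
def IsModerate (x : Eps → K) : Prop :=
  ∃ a : ℝ, ∃ ε₀ ∈ Set.Ioo (0:ℝ) 1, ∀ ε : Eps, (ε : ℝ) ≤ ε₀ → ‖x ε‖ ≤ (ε : ℝ) ^ a

/-- A net `(x_ε)_{ε ∈ (0,1)}` is negligible if for every `a ∈ ℝ`, `|x_ε| ≤ ε^a`
for all sufficiently small `ε`. -/
def IsNegligible (x : Eps → K) : Prop :=
  ∀ a : ℝ, ∃ ε₀ ∈ Set.Ioo (0:ℝ) 1, ∀ ε : Eps, (ε : ℝ) ≤ ε₀ → ‖x ε‖ ≤ (ε : ℝ) ^ a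

theorem rpow_two_bound {ε : ℝ} (h0 : 0 < ε) (h2 : ε ≤ 1/2) (a b : ℝ) :
    ε ^ a + ε ^ b ≤ ε ^ (min a b - 1) := by
  have h1 : ε ≤ 1 := h2.trans (by norm_num)
  have ha : ε ^ a ≤ ε ^ min a b :=
    Real.rpow_le_rpow_of_exponent_ge h0 h1 (min_le_left a b)
  have hb : ε ^ b ≤ ε ^ min a b :=
    Real.rpow_le_rpow_of_exponent_ge h0 h1 (min_le_right a b)
  have key : 2 * ε ^ min a b ≤ ε ^ (min a b - 1) := by
    rw [Real.rpow_sub h0, Real.rpow_one, le_div_iff₀ h0]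
    have hx : (0:ℝ) ≤ ε ^ min a b := (Real.rpow_pos_of_pos h0 _).le
    calc 2 * ε ^ min a b * ε ≤ 2 * ε ^ min a b * (1/2) := by
          apply mul_le_mul_of_nonneg_left h2 (by positivity)
      _ = ε ^ min a b := by ring
  calc ε ^ a + ε ^ b ≤ 2 * ε ^ min a b := by linarith
    _ ≤ ε ^ (min a b - 1) := key

/-- The ring of moderate nets, as a subring of `K^{(0,1)}`. -/
def Moderate : Subring (Eps → K) where
  carrier := {x | IsModerate K x}
  zero_mem' := by
    refine ⟨0, 1/2, by constructor <;> norm_num, fun ε _ => ?_⟩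
    simp [Real.rpow_zero]
  one_mem' := by
    refine ⟨0, 1/2, by constructor <;> norm_num, fun ε _ => ?_⟩
    simp [Real.rpow_zero]
  add_mem' := by
    rintro x y ⟨a, ε₀, h₀, ha⟩ ⟨b, ε₁, h₁, hb⟩
    refine ⟨min a b - 1, min (min ε₀ ε₁) (1/2), ⟨lt_min (lt_min h₀.1 h₁.1) (by norm_num), ?_⟩,
      fun ε hε => ?_⟩
    · calc min (min ε₀ ε₁) (1/2) ≤ 1/2 := min_le_right _ _
        _ < 1 := by norm_num
    · have hε₀ : (ε:ℝ) ≤ ε₀ := le_trans hε (le_trans (min_le_left _ _) (min_le_left _ _))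
      have hε₁ : (ε:ℝ) ≤ ε₁ := le_trans hε (le_trans (min_le_left _ _) (min_le_right _ _))
      have hε2 : (ε:ℝ) ≤ 1/2 := le_trans hε (min_le_right _ _)
      calc ‖(x + y) ε‖ ≤ ‖x ε‖ + ‖y ε‖ := norm_add_le _ _
        _ ≤ (ε:ℝ) ^ a + (ε:ℝ) ^ b := add_le_add (ha ε hε₀) (hb ε hε₁)
        _ ≤ (ε:ℝ) ^ (min a b - 1) := rpow_two_bound ε.2.1 hε2 a b
  neg_mem' := by
    rintro x ⟨a, ε₀, h₀, ha⟩
    exact ⟨a, ε₀, h₀, fun ε hε => by simpa using ha ε hε⟩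
  mul_mem' := by
    rintro x y ⟨a, ε₀, h₀, ha⟩ ⟨b, ε₁, h₁, hb⟩
    refine ⟨a + b, min ε₀ ε₁, ⟨lt_min h₀.1 h₁.1, lt_of_le_of_lt (min_le_left _ _) h₀.2⟩,
      fun ε hε => ?_⟩
    have hε₀ : (ε:ℝ) ≤ ε₀ := le_trans hε (min_le_left _ _)
    have hε₁ : (ε:ℝ) ≤ ε₁ := le_trans hε (min_le_right _ _)
    calc ‖(x * y) ε‖ = ‖x ε‖ * ‖y ε‖ := norm_mul _ _
      _ ≤ (ε:ℝ) ^ a * (ε:ℝ) ^ b :=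
        mul_le_mul (ha ε hε₀) (hb ε hε₁) (norm_nonneg _) (Real.rpow_pos_of_pos ε.2.1 _).le
      _ = (ε:ℝ) ^ (a + b) := (Real.rpow_add ε.2.1 _ _).symm

theorem mem_moderate {f : Eps → K} (h : IsModerate K f) : f ∈ Moderate K := h

/-- The ideal of negligible nets in the ring of moderate nets. -/
def Negligible : Ideal (Moderate K) where
  carrier := {x | IsNegligible K (x : Eps → K)}
  zero_mem' := by
    intro a
    refine ⟨1/2, by constructor <;> norm_num, fun ε _ => ?_⟩
    have : (0:ℝ) ≤ (ε:ℝ) ^ a := (Real.rpow_pos_of_pos ε.2.1 _).le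
    simpa using this
  add_mem' := by
    intro x y hx hy a
    obtain ⟨ε₀, h₀, ha⟩ := hx (a + 1)
    obtain ⟨ε₁, h₁, hb⟩ := hy (a + 1)
    refine ⟨min (min ε₀ ε₁) (1/2), ⟨lt_min (lt_min h₀.1 h₁.1) (by norm_num), ?_⟩, fun ε hε => ?_⟩
    · calc min (min ε₀ ε₁) (1/2) ≤ 1/2 := min_le_right _ _
        _ < 1 := by norm_num
    · have hε₀ : (ε:ℝ) ≤ ε₀ := le_trans hε (le_trans (min_le_left _ _) (min_le_left _ _))
      have hε₁ : (ε:ℝ) ≤ ε₁ := le_trans hε (le_trans (min_le_left _ _) (min_le_right _ _))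
      have hε2 : (ε:ℝ) ≤ 1/2 := le_trans hε (min_le_right _ _)
      have hbd := rpow_two_bound (ε := (ε:ℝ)) ε.2.1 hε2 (a+1) (a+1)
      simp only [min_self, add_sub_cancel_right] at hbd
      calc ‖((x + y : Moderate K) : Eps → K) ε‖ ≤ ‖(x : Eps → K) ε‖ + ‖(y : Eps → K) ε‖ := by
            push_cast
            exact norm_add_le _ _
        _ ≤ (ε:ℝ) ^ (a+1) + (ε:ℝ) ^ (a+1) := add_le_add (ha ε hε₀) (hb ε hε₁)
        _ ≤ (ε:ℝ) ^ a := hbd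
  smul_mem' := by
    intro c x hx
    show IsNegligible K ((c * x : Moderate K) : Eps → K)
    intro a
    obtain ⟨b, ε₀, h₀, hc⟩ := c.property
    obtain ⟨ε₁, h₁, hxa⟩ := hx (a - b)
    refine ⟨min ε₀ ε₁, ⟨lt_min h₀.1 h₁.1, lt_of_le_of_lt (min_le_left _ _) h₀.2⟩,
      fun ε hε => ?_⟩
    have hε₀ : (ε:ℝ) ≤ ε₀ := le_trans hε (min_le_left _ _)
    have hε₁ : (ε:ℝ) ≤ ε₁ := le_trans hε (min_le_right _ _)
    calc ‖((c * x : Moderate K) : Eps → K) ε‖ = ‖(c : Eps → K) ε‖ * ‖(x : Eps → K) ε‖ := by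
          push_cast
          exact norm_mul _ _
      _ ≤ (ε:ℝ) ^ b * (ε:ℝ) ^ (a - b) :=
        mul_le_mul (hc ε hε₀) (hxa ε hε₁) (norm_nonneg _) (Real.rpow_pos_of_pos ε.2.1 _).le
      _ = (ε:ℝ) ^ a := by rw [← Real.rpow_add ε.2.1]; ring_nf

/-- The ring of Colombeau generalized numbers: the quotient of the ring of
moderate nets by the ideal of negligible nets. -/
abbrev CGen : Type := Moderate K ⧸ Negligible K

/-- The quotient map. -/
abbrev cmk : Moderate K →+* CGen K := Ideal.Quotient.mk (Negligible K)

/-- A canonical representative of a Colombeau generalized number. -/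
def rep (x : CGen K) : Moderate K := (Ideal.Quotient.mk_surjective x).choose

theorem rep_spec (x : CGen K) : cmk K (rep K x) = x :=
  (Ideal.Quotient.mk_surjective x).choose_spec

theorem indicator_moderate (S : Set Eps) :
    IsModerate K (fun ε => if ε ∈ S then (1:K) else 0) := by
  refine ⟨0, 1/2, by constructor <;> norm_num, fun ε _ => ?_⟩
  rw [Real.rpow_zero]
  by_cases h : ε ∈ S <;> simp [h]

/-- `e_S`: the generalized number given by the characteristic function of `S ⊆ (0,1)`. -/
def eS (S : Set Eps) : CGen K :=
  cmk K ⟨fun ε => if ε ∈ S then (1:K) else 0, mem_moderate K (indicator_moderate K S)⟩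

theorem absNet_moderate (f : Moderate K) :
    IsModerate K (fun ε => ((‖(f : Eps → K) ε‖ : ℝ) : K)) := by
  obtain ⟨a, ε₀, h₀, h⟩ := f.property
  refine ⟨a, ε₀, h₀, fun ε hε => ?_⟩
  simpa [RCLike.norm_ofReal, abs_norm] using h ε hε

/-- `|x|`: the class of the net `(|x_ε|)_ε` (for any representative of `x`). -/
def absC (x : CGen K) : CGen K :=
  cmk K ⟨_, mem_moderate K (absNet_moderate K (rep K x))⟩

theorem minNet_moderate (f g : Moderate K) :
    IsModerate K (fun ε => ((min ‖(f : Eps → K) ε‖ ‖(g : Eps → K) ε‖ : ℝ) : K)) := by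
  obtain ⟨a, ε₀, h₀, h⟩ := f.property
  refine ⟨a, ε₀, h₀, fun ε hε => ?_⟩
  rw [RCLike.norm_ofReal, abs_of_nonneg (le_min (norm_nonneg _) (norm_nonneg _))]
  exact le_trans (min_le_left _ _) (h ε hε)

/-- `|x| ∧ |y|`: the class of the pointwise minimum of `(|x_ε|)_ε` and `(|y_ε|)_ε`. -/
def infAbs (x y : CGen K) : CGen K :=
  cmk K ⟨_, mem_moderate K (minNet_moderate K (rep K x) (rep K y))⟩

theorem sqrtNet_moderate (f : Moderate K) :
    IsModerate K (fun ε => ((Real.sqrt ‖(f : Eps → K) ε‖ : ℝ) : K)) := by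
  obtain ⟨a, ε₀, h₀, h⟩ := f.property
  refine ⟨a / 2, ε₀, h₀, fun ε hε => ?_⟩
  rw [RCLike.norm_ofReal, abs_of_nonneg (Real.sqrt_nonneg _)]
  calc Real.sqrt ‖(f : Eps → K) ε‖ ≤ Real.sqrt ((ε:ℝ) ^ a) := Real.sqrt_le_sqrt (h ε hε)
    _ = (ε:ℝ) ^ (a / 2) := by
        rw [Real.sqrt_eq_rpow, ← Real.rpow_mul ε.2.1.le]
        ring_nf

/-- `√|x|`: the class of the net `(√|x_ε|)_ε` (for any representative of `x`). -/
def sqrtAbs (x : CGen K) : CGen K :=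
  cmk K ⟨_, mem_moderate K (sqrtNet_moderate K (rep K x))⟩

/-- The annihilator `Ann(a) = {x : x·a = 0}` as an ideal. -/
def annIdeal (a : CGen K) : Ideal (CGen K) where
  carrier := {x | x * a = 0}
  zero_mem' := by simp
  add_mem' := by
    intro x y hx hy
    show (x + y) * a = 0
    rw [add_mul, hx, hy, add_zero]
  smul_mem' := by
    intro c x hx
    show c * x * a = 0
    rw [mul_assoc, hx, mul_zero]

/-- The order relation on `𝕂̃`: `x ≤ y` iff there exist (real-valued) representatives
`(u_ε)_ε` of `x` and `(v_ε)_ε` of `y` with `u_ε ≤ v_ε` for all `ε`. -/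
def leC (x y : CGen K) : Prop :=
  ∃ u v : Moderate K, cmk K u = x ∧ cmk K v = y ∧
    ∀ ε : Eps, ∃ r s : ℝ, (u : Eps → K) ε = (r : K) ∧ (v : Eps → K) ε = (s : K) ∧ r ≤ s

/-- A z-ideal: if `b ∈ I` and `a` belongs to exactly the same maximal ideals as `b`,
then `a ∈ I`. -/
def IsZIdeal (I : Ideal (CGen K)) : Prop :=
  ∀ a b : CGen K, b ∈ I →
    (∀ M : Ideal (CGen K), M.IsMaximal → (a ∈ M ↔ b ∈ M)) → a ∈ I

/-
On a set `S ⊆ (0,1)` of indices the characteristic net `e_S` is an idempotent of `𝕂̃`, and a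
pseudoprime ideal contains `e_S` or `e_{Sᶜ} = 1 - e_S`. If `I + J ≠ 𝕂̃`, both ideals must contain
the same one of the two. Given `x ∈ I \ J` and `y ∈ J \ I`, split `(0,1)` into the set `S` where
`|x_ε| ≤ |y_ε|` and its complement: then `e_S x` is a multiple of `y` and `e_{Sᶜ} y` a multiple
of `x`, which puts `x` into `J` or `y` into `I`. Hence `I` and `J` are comparable.
-/

def Ideal.IsPseudoprime {R : Type*} [CommRing R] (I : Ideal R) : Prop :=
  ∀ a b : R, a * b = 0 → a ∈ I ∨ b ∈ I

namespace Ideal.IsPseudoprime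

variable {R : Type*} [CommRing R] {I J : Ideal R}

theorem mem_or_one_sub_mem (hI : I.IsPseudoprime) {e : R} (he : IsIdempotentElem e) :
    e ∈ I ∨ 1 - e ∈ I :=
  hI _ _ he.mul_one_sub_self

theorem mem_and_mem_or_one_sub_mem_and_mem (hI : I.IsPseudoprime) (hJ : J.IsPseudoprime)
    (hIJ : I ⊔ J ≠ ⊤) {e : R} (he : IsIdempotentElem e) :
    (e ∈ I ∧ e ∈ J) ∨ (1 - e ∈ I ∧ 1 - e ∈ J) := by
  have one_mem_sup {a b : R} (ha : a ∈ I ⊔ J) (hb : b ∈ I ⊔ J) (hab : a + b = 1) : False :=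
    hIJ ((I ⊔ J).eq_top_iff_one.mpr (hab ▸ add_mem ha hb))
  rcases hI.mem_or_one_sub_mem he with heI | heI <;>
    rcases hJ.mem_or_one_sub_mem he with heJ | heJ
  · exact .inl ⟨heI, heJ⟩
  · exact (one_mem_sup (mem_sup_left heI) (mem_sup_right heJ) (add_sub_cancel e 1)).elim
  · exact (one_mem_sup (mem_sup_right heJ) (mem_sup_left heI) (add_sub_cancel e 1)).elim
  · exact .inr ⟨heI, heJ⟩

theorem le_or_le
    (hsplit : ∀ x y : R, ∃ e, IsIdempotentElem e ∧ y ∣ e * x ∧ x ∣ (1 - e) * y)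
    (hI : I.IsPseudoprime) (hJ : J.IsPseudoprime) (hIJ : I ⊔ J ≠ ⊤) : I ≤ J ∨ J ≤ I := by
  by_contra! h
  obtain ⟨x, hxI, hxJ⟩ := SetLike.not_le_iff_exists.mp h.1
  obtain ⟨y, hyJ, hyI⟩ := SetLike.not_le_iff_exists.mp h.2
  obtain ⟨e, he, hyx, hxy⟩ := hsplit x y
  have split (z : R) : z = e * z + (1 - e) * z := by ring
  rcases mem_and_mem_or_one_sub_mem_and_mem hI hJ hIJ he with ⟨heI, -⟩ | ⟨-, heJ⟩
  · exact hyI (split y ▸ add_mem (mul_mem_right y I heI) (mem_of_dvd I hxy hxI))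
  · exact hxJ (split x ▸ add_mem (mem_of_dvd J hyx hyJ) (mul_mem_right x J heJ))

end Ideal.IsPseudoprime

theorem isModerate_of_norm_le_one {x : Eps → K} (hx : ∀ ε, ‖x ε‖ ≤ 1) : IsModerate K x :=
  ⟨0, 1/2, by norm_num, fun ε _ => by simpa using hx ε⟩

theorem isIdempotentElem_eS (S : Set Eps) : IsIdempotentElem (eS K S) := by
  rw [IsIdempotentElem, eS, ← map_mul]
  congr 1
  ext ε
  by_cases h : ε ∈ S <;> simp [h]

theorem one_sub_eS (S : Set Eps) : 1 - eS K S = eS K Sᶜ := by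
  rw [eS, eS, ← map_one (cmk K), ← map_sub]
  congr 1
  ext ε
  by_cases h : ε ∈ S <;> simp [h]

-- The witness is the net `f_ε / g_ε` on `S` and `0` off `S`, which is bounded by `1`.
theorem cmk_dvd_eS_mul_cmk (f g : Moderate K) (S : Set Eps)
    (hS : ∀ ε ∈ S, ‖(f : Eps → K) ε‖ ≤ ‖(g : Eps → K) ε‖) :
    cmk K g ∣ eS K S * cmk K f := by
  let q : Eps → K := fun ε => if ε ∈ S then (f : Eps → K) ε / (g : Eps → K) ε else 0
  have hq : IsModerate K q := isModerate_of_norm_le_one K fun ε => by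
    by_cases h : ε ∈ S
    · simpa [q, h, norm_div] using div_le_one_of_le₀ (hS ε h) (norm_nonneg _)
    · simp [q, h]
  refine ⟨cmk K ⟨q, hq⟩, ?_⟩
  rw [eS, ← map_mul, ← map_mul]
  congr 1
  ext ε
  by_cases h : ε ∈ S
  · rcases eq_or_ne ((g : Eps → K) ε) 0 with hg | hg
    · have hf : (f : Eps → K) ε = 0 := norm_le_zero_iff.mp (by simpa [hg] using hS ε h)
      simp [q, h, hf, hg]
    · simp [q, h, mul_div_cancel₀ _ hg]
  · simp [q, h]

theorem CGen.exists_isIdempotentElem_dvd (x y : CGen K) :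
    ∃ e, IsIdempotentElem e ∧ y ∣ e * x ∧ x ∣ (1 - e) * y := by
  let S : Set Eps := {ε | ‖(rep K x : Eps → K) ε‖ ≤ ‖(rep K y : Eps → K) ε‖}
  refine ⟨eS K S, isIdempotentElem_eS K S, ?_, ?_⟩
  · simpa only [rep_spec] using cmk_dvd_eS_mul_cmk K (rep K x) (rep K y) S fun _ h => h
  · rw [one_sub_eS]
    simpa only [rep_spec] using cmk_dvd_eS_mul_cmk K (rep K y) (rep K x) Sᶜ
      fun _ h => (not_le.mp (Set.notMem_ofPred_iff.mp h)).le

theorem stmt7 (I J : Ideal (CGen K))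
    (hIp : ∀ a b : CGen K, a * b = 0 → a ∈ I ∨ b ∈ I)
    (hJp : ∀ a b : CGen K, a * b = 0 → a ∈ J ∨ b ∈ J) :
    I + J = I ∨ I + J = J ∨ I + J = ⊤ := by
  rw [Ideal.add_eq_sup]
  by_cases htop : I ⊔ J = ⊤
  · exact .inr (.inr htop)
  rcases Ideal.IsPseudoprime.le_or_le (CGen.exists_isIdempotentElem_dvd K) hIp hJp htop with h | h
  · exact .inr (.inl (sup_eq_right.mpr h))
  · exact .inl (sup_eq_left.mpr h)

end
end

section
/- Assume 2^{ℵ₀} < 2^{ℵ₁} (which holds, e.g., under the continuum hypothesis). Then there exist a proper ideal I of 𝕂̃ and a 𝕂̃-linear map φ : I → 𝕂̃ satisfying |φ(x)| ≤ |x| for all x ∈ I (hence φ is continuous for the sharp topology) such that φ cannot be extended to a 𝕂̃-linear map ψ : 𝕂̃ → 𝕂̃. -/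
noncomputable section

set_option maxHeartbeats 1000000
set_option synthInstance.maxHeartbeats 400000

open scoped Classical

variable (K : Type) [RCLike K]

/-!
Let `P = {1/(n+2)}`. Coding the nodes of the binary tree as points of `P`, the branches give
sets `B_f ⊆ P` (`f : ℕ → Bool`) accumulating at `0` with pairwise finite intersections, so the
`e_f = [1_{B_f}]` are nonzero orthogonal idempotents. Let `I` be the ideal they generate; it is
proper because the nonzero `[1_{Pᶜ}]` annihilates it. For `T ⊆ ℕ → Bool`, the map
`φ_T : ∑ c_f e_f ↦ ∑_{f ∈ T} c_f e_f` is well defined on `I`, and on each element it is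
multiplication by an idempotent `[1_U]`, whence `|φ_T x| ≤ |x|`. A linear extension of `φ_T` is
multiplication by some `C`, and then `T = {f | C e_f = e_f}`. This set only depends on the values of
a representative of `C` on `P`, so at most `𝔠` sets `T` arise this way, while there are `2^𝔠`.
-/

section OrthogonalIdempotents

open Finsupp

variable {R ι : Type*} [CommRing R] {e : ι → R}

theorem OrthogonalIdempotents.mul_linearCombination (he : OrthogonalIdempotents e)
    (m : ι →₀ R) (i : ι) : e i * linearCombination R e m = m i * e i := by
  rw [linearCombination_apply, Finsupp.mul_sum, Finsupp.sum, Finset.sum_eq_single i]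
  · rw [smul_eq_mul, mul_left_comm, (he.idem i).eq]
  · intro j _ hji
    rw [smul_eq_mul, mul_left_comm, he.ortho hji.symm, mul_zero]
  · intro hi
    rw [notMem_support_iff.mp hi, zero_smul, mul_zero]

theorem OrthogonalIdempotents.ker_le_ker_indicator (he : OrthogonalIdempotents e) (T : Set ι) :
    LinearMap.ker (linearCombination R e) ≤
      LinearMap.ker (linearCombination R (T.indicator e)) := by
  intro m hm
  have hterm (i : ι) : m i * e i = 0 := by
    rw [← he.mul_linearCombination, LinearMap.mem_ker.mp hm, mul_zero]
  rw [LinearMap.mem_ker, linearCombination_apply]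
  refine Finset.sum_eq_zero fun i _ => ?_
  by_cases hi : i ∈ T <;> simp [hi, hterm]

/-- On the ideal spanned by the `e i`, the map `∑ cᵢ eᵢ ↦ ∑_{i ∈ T} cᵢ eᵢ`. -/
noncomputable def OrthogonalIdempotents.indicatorMap (he : OrthogonalIdempotents e) (T : Set ι) :
    LinearMap.range (linearCombination R e) →ₗ[R] R :=
  ((LinearMap.ker _).liftQ _ (he.ker_le_ker_indicator T)).comp
    (LinearMap.quotKerEquivRange _).symm.toLinearMap

theorem OrthogonalIdempotents.indicatorMap_apply (he : OrthogonalIdempotents e) (T : Set ι)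
    (x : LinearMap.range (linearCombination R e)) (m : ι →₀ R)
    (hx : (x : R) = linearCombination R e m) :
    he.indicatorMap T x = linearCombination R (T.indicator e) m := by
  obtain rfl : x = ⟨_, LinearMap.mem_range_self _ m⟩ := Subtype.ext hx
  rw [indicatorMap, LinearMap.comp_apply, LinearEquiv.coe_coe,
    LinearMap.quotKerEquivRange_symm_apply_image, Submodule.mkQ_apply, Submodule.liftQ_apply]

theorem OrthogonalIdempotents.setOf_mul_eq_self_of_extends (he : OrthogonalIdempotents e)
    (hne : ∀ i, e i ≠ 0) {T : Set ι} {ψ : R →ₗ[R] R}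
    (hψ : ∀ x : LinearMap.range (linearCombination R e), ψ x = he.indicatorMap T x) :
    {i | ψ 1 * e i = e i} = T := by
  have hmul (i : ι) : ψ 1 * e i = T.indicator e i := by
    have h := hψ ⟨e i, single i 1, by simp⟩
    rw [he.indicatorMap_apply T _ (single i 1) (by simp)] at h
    have hψe : ψ (e i) = e i * ψ 1 := by
      rw [← smul_eq_mul, ← LinearMap.map_smul, smul_eq_mul, mul_one]
    simpa [hψe, mul_comm] using h
  ext i
  by_cases hi : i ∈ T <;> simp [hmul, hi, hne i]

theorem range_linearCombination_ne_top {c : R} (hc : c ≠ 0) (hce : ∀ i, c * e i = 0) :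
    LinearMap.range (linearCombination R e) ≠ ⊤ := by
  intro htop
  obtain ⟨m, hm⟩ : (1 : R) ∈ LinearMap.range (linearCombination R e) :=
    htop ▸ Submodule.mem_top
  apply hc
  rw [← mul_one c, ← hm, linearCombination_apply, Finsupp.mul_sum]
  exact Finset.sum_eq_zero fun i _ => by simp only [smul_eq_mul, mul_left_comm c, hce, mul_zero]

end OrthogonalIdempotents

section Colombeau

open Topology

theorem cmk_eq_zero_iff (u : Moderate K) : cmk K u = 0 ↔ IsNegligible K u :=
  Ideal.Quotient.eq_zero_iff_mem

theorem cmk_eq_cmk_iff (u v : Moderate K) :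
    cmk K u = cmk K v ↔ IsNegligible K (u - v : Moderate K) :=
  Ideal.Quotient.eq

def indicatorNet (S : Set Eps) : Moderate K :=
  ⟨fun ε => if ε ∈ S then (1 : K) else 0, mem_moderate K (indicator_moderate K S)⟩

theorem eS_eq_cmk (S : Set Eps) : eS K S = cmk K (indicatorNet K S) := rfl

theorem indicatorNet_apply (S : Set Eps) (ε : Eps) :
    (indicatorNet K S : Eps → K) ε = if ε ∈ S then 1 else 0 := rfl

theorem eS_mul_eS (S T : Set Eps) : eS K S * eS K T = eS K (S ∩ T) := by
  rw [eS_eq_cmk, eS_eq_cmk, eS_eq_cmk, ← map_mul]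
  congr 1
  ext ε
  simp only [MulMemClass.coe_mul, Pi.mul_apply, indicatorNet_apply, Set.mem_inter_iff]
  split_ifs <;> simp_all

theorem eS_eq_zero_of_finite {F : Set Eps} (hF : F.Finite) : eS K F = 0 := by
  have hnear : ∀ᶠ δ in 𝓝[>] (0 : ℝ), δ ∈ Set.Ioo (0 : ℝ) 1 ∧ ∀ ε ∈ F, δ < ε := by
    refine Filter.Eventually.and (Ioo_mem_nhdsGT one_pos) ((Filter.eventually_all_finite hF).2 ?_)
    exact fun ε _ => Filter.Eventually.filter_mono nhdsWithin_le_nhds (eventually_lt_nhds ε.2.1)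
  obtain ⟨ε₀, hε₀, hF₀⟩ := hnear.exists
  rw [eS_eq_cmk, cmk_eq_zero_iff]
  refine fun a => ⟨ε₀, hε₀, fun ε hε => ?_⟩
  have hεF : ε ∉ F := fun h => (hF₀ ε h).not_ge hε
  simp only [indicatorNet_apply, hεF, if_false, norm_zero]
  exact (Real.rpow_pos_of_pos ε.2.1 a).le

def AccumulatesAtZero (S : Set Eps) : Prop := ∀ δ > 0, ∃ ε ∈ S, (ε : ℝ) < δ

theorem accumulatesAtZero_compl_of_countable {P : Set Eps} (hP : P.Countable) :
    AccumulatesAtZero Pᶜ := by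
  intro δ hδ
  obtain ⟨x, hxP, hx⟩ := ((hP.image Subtype.val).dense_compl ℝ).exists_mem_open isOpen_Ioo
    (Set.nonempty_Ioo.2 (lt_min hδ one_pos))
  exact ⟨⟨x, hx.1, hx.2.trans_le (min_le_right _ _)⟩, fun h => hxP ⟨_, h, rfl⟩,
    hx.2.trans_le (min_le_left _ _)⟩

theorem eS_ne_zero {S : Set Eps} (hS : AccumulatesAtZero S) : eS K S ≠ 0 := by
  rw [eS_eq_cmk, Ne, cmk_eq_zero_iff]
  intro hneg
  obtain ⟨ε₀, hε₀, hbound⟩ := hneg 1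
  obtain ⟨ε, hεS, hε⟩ := hS ε₀ hε₀.1
  have h := hbound ε hε.le
  simp only [indicatorNet_apply, hεS, if_true, norm_one, Real.rpow_one] at h
  exact h.not_gt ε.2.2

theorem mul_eS_eq_of_eqOn {u v : Moderate K} {S : Set Eps}
    (h : Set.EqOn (u : Eps → K) v S) : cmk K u * eS K S = cmk K v * eS K S := by
  rw [eS_eq_cmk, ← map_mul, ← map_mul]
  congr 1
  ext ε
  simp only [MulMemClass.coe_mul, Pi.mul_apply, indicatorNet_apply]
  split_ifs with hε
  · rw [h hε]
  · rw [mul_zero, mul_zero]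

theorem absC_cmk (w : Moderate K) :
    absC K (cmk K w) = cmk K ⟨_, mem_moderate K (absNet_moderate K w)⟩ := by
  rw [absC, cmk_eq_cmk_iff]
  intro a
  obtain ⟨ε₀, hε₀, hbound⟩ := (cmk_eq_cmk_iff K _ _).1 (rep_spec K (cmk K w)) a
  refine ⟨ε₀, hε₀, fun ε hε => le_trans ?_ (hbound ε hε)⟩
  simp only [AddSubgroupClass.coe_sub, Pi.sub_apply, ← RCLike.ofReal_sub, RCLike.norm_ofReal]
  exact abs_norm_sub_norm_le _ _

theorem absC_mul_eS_le (x : CGen K) (S : Set Eps) : leC K (absC K (x * eS K S)) (absC K x) := by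
  obtain ⟨w, rfl⟩ := Ideal.Quotient.mk_surjective x
  rw [eS_eq_cmk, ← map_mul, absC_cmk, absC_cmk]
  refine ⟨_, _, rfl, rfl, fun ε => ⟨_, _, rfl, rfl, ?_⟩⟩
  simp only [MulMemClass.coe_mul, Pi.mul_apply, indicatorNet_apply]
  split_ifs <;> simp

theorem orthogonalIdempotents_eS {ι : Type*} {A : ι → Set Eps}
    (hA : Pairwise fun i j => (A i ∩ A j).Finite) :
    OrthogonalIdempotents fun i => eS K (A i) where
  idem i := by rw [IsIdempotentElem, eS_mul_eS, Set.inter_self]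
  ortho i j hij := by dsimp only; rw [eS_mul_eS, eS_eq_zero_of_finite K (hA hij)]

end Colombeau

section AlmostDisjoint

open Finsupp

variable {ι : Type*} {A : ι → Set Eps}

theorem eS_mul_eS_biUnion (hA : Pairwise fun i j => (A i ∩ A j).Finite) {s : Set ι}
    (hs : s.Finite) (T : Set ι) {i : ι} (hi : i ∈ s) :
    eS K (A i) * eS K (⋃ j ∈ s ∩ T, A j) = T.indicator (fun j => eS K (A j)) i := by
  rw [eS_mul_eS]
  by_cases hiT : i ∈ T
  · have hsub : A i ⊆ ⋃ j ∈ s ∩ T, A j :=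
      Set.subset_biUnion_of_mem (show i ∈ s ∩ T from ⟨hi, hiT⟩)
    rw [Set.indicator_of_mem hiT, Set.inter_eq_left.2 hsub]
  · rw [Set.indicator_of_notMem hiT, Set.inter_iUnion₂]
    refine eS_eq_zero_of_finite K ((hs.inter_of_left T).biUnion fun j hj => hA ?_)
    rintro rfl
    exact hiT hj.2

theorem linearCombination_indicator_eS (hA : Pairwise fun i j => (A i ∩ A j).Finite)
    (T : Set ι) (m : ι →₀ CGen K) :
    linearCombination (CGen K) (T.indicator fun j => eS K (A j)) m =
      linearCombination (CGen K) (fun j => eS K (A j)) m *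
        eS K (⋃ j ∈ (m.support : Set ι) ∩ T, A j) := by
  rw [linearCombination_apply, linearCombination_apply, Finsupp.sum, Finsupp.sum, Finset.sum_mul]
  refine Finset.sum_congr rfl fun i hi => ?_
  rw [smul_eq_mul, smul_eq_mul, mul_assoc,
    eS_mul_eS_biUnion K hA m.support.finite_toSet T (Finset.mem_coe.2 hi)]

end AlmostDisjoint

def natPoint (n : ℕ) : Eps :=
  ⟨1 / (n + 2), by positivity, by
    rw [div_lt_one (by positivity)]
    linarith [n.cast_nonneg (α := ℝ)]⟩

theorem natPoint_injective : Function.Injective natPoint := by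
  intro n m h
  have h' : 1 / ((n : ℝ) + 2) = 1 / ((m : ℝ) + 2) := congrArg Subtype.val h
  rw [one_div, one_div, inv_inj, add_left_inj] at h'
  exact_mod_cast h'

theorem natPoint_lt {δ : ℝ} (hδ : 0 < δ) {n : ℕ} (hn : 1 / δ < n) :
    (natPoint n : ℝ) < δ := by
  show 1 / ((n : ℝ) + 2) < δ
  rw [div_lt_iff₀ (by positivity)]
  rw [div_lt_iff₀ hδ] at hn
  nlinarith

def prefixCode (f : ℕ → Bool) (k : ℕ) : ℕ :=
  Encodable.encode (List.ofFn fun i : Fin k => f i)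

theorem prefixCode_eq_prefixCode {f g : ℕ → Bool} {k j : ℕ}
    (h : prefixCode f k = prefixCode g j) : k = j ∧ ∀ i < k, f i = g i := by
  have hl := Encodable.encode_injective h
  obtain rfl : k = j := by simpa using congrArg List.length hl
  exact ⟨rfl, fun i hi => congrFun (List.ofFn_injective hl) ⟨i, hi⟩⟩

theorem prefixCode_injective (f : ℕ → Bool) : Function.Injective (prefixCode f) :=
  fun _ _ h => (prefixCode_eq_prefixCode h).1

theorem finite_range_prefixCode_inter {f g : ℕ → Bool} (h : f ≠ g) :
    (Set.range (prefixCode f) ∩ Set.range (prefixCode g)).Finite := by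
  obtain ⟨n, hn⟩ := Function.ne_iff.mp h
  refine ((Set.finite_Iic n).image (prefixCode f)).subset ?_
  rintro _ ⟨⟨k, rfl⟩, ⟨j, hj⟩⟩
  obtain ⟨rfl, hgf⟩ := prefixCode_eq_prefixCode hj
  exact ⟨j, Set.mem_Iic.2 (not_lt.1 fun hn' => hn (hgf n hn').symm), rfl⟩

/-- The branch of the binary tree through `f`, its nodes coded as the points `1/(n+2)`. -/
def branchSet (f : ℕ → Bool) : Set Eps := natPoint '' Set.range (prefixCode f)

theorem branchSet_subset_range (f : ℕ → Bool) : branchSet f ⊆ Set.range natPoint :=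
  Set.image_subset_range _ _

theorem pairwise_finite_branchSet_inter :
    Pairwise fun f g => (branchSet f ∩ branchSet g).Finite := by
  intro f g h
  rw [branchSet, branchSet, ← Set.image_inter natPoint_injective]
  exact (finite_range_prefixCode_inter h).image _

theorem accumulatesAtZero_branchSet (f : ℕ → Bool) : AccumulatesAtZero (branchSet f) := by
  intro δ hδ
  obtain ⟨N, hN⟩ := exists_nat_gt (1 / δ)
  obtain ⟨n, hn, hNn⟩ := (Set.infinite_range_of_injective (prefixCode_injective f)).exists_gt N
  exact ⟨natPoint n, Set.mem_image_of_mem _ hn,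
    natPoint_lt hδ (hN.trans (by exact_mod_cast hNn))⟩

open Cardinal in
theorem mk_le_continuum_of_rclike : #K ≤ 𝔠 := by
  have hinj : Function.Injective fun x : K => (RCLike.re x, RCLike.im x) :=
    fun x y h => RCLike.ext (congrArg Prod.fst h) (congrArg Prod.snd h)
  calc #K ≤ #(ℝ × ℝ) := mk_le_of_injective hinj
    _ = 𝔠 := by rw [mk_prod, lift_id, mk_real, continuum_mul_self]

def fixedBranches (C : CGen K) : Set (ℕ → Bool) :=
  {f | C * eS K (branchSet f) = eS K (branchSet f)}

theorem fixedBranches_factorsThrough :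
    (fixedBranches K).FactorsThrough fun C n => (rep K C : Eps → K) (natPoint n) := by
  intro C C' h
  ext f
  have hC : C * eS K (branchSet f) = C' * eS K (branchSet f) := by
    rw [← rep_spec K C, ← rep_spec K C']
    refine mul_eS_eq_of_eqOn K ?_
    rintro _ ⟨k, -, rfl⟩
    exact congrFun h k
  simp only [fixedBranches, Set.mem_ofPred_eq, hC]

open Cardinal in
theorem exists_notMem_range_fixedBranches : ∃ T, T ∉ Set.range (fixedBranches K) := by
  by_contra! h
  have hsurj : Function.Surjective
      (Function.extend (fun C n => (rep K C : Eps → K) (natPoint n)) (fixedBranches K) ⊥) := by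
    intro T
    obtain ⟨C, rfl⟩ := h T
    exact ⟨_, (fixedBranches_factorsThrough K).extend_apply _ C⟩
  have hbranches : #(ℕ → Bool) = 𝔠 := by
    rw [← power_def, mk_bool, mk_nat, two_power_aleph0]
  have hcount : #(Set (ℕ → Bool)) ≤ #(ℕ → K) := mk_le_of_surjective hsurj
  rw [mk_set, hbranches, ← power_def, mk_nat] at hcount
  refine (cantor 𝔠).not_ge (hcount.trans ?_)
  calc #K ^ ℵ₀ ≤ 𝔠 ^ ℵ₀ := power_le_power_right (mk_le_continuum_of_rclike K)
    _ = 𝔠 := continuum_power_aleph0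

theorem stmt18 :
    ∃ I : Ideal (CGen K), I ≠ ⊤ ∧
      ∃ φ : I →ₗ[CGen K] CGen K,
        (∀ x : I, leC K (absC K (φ x)) (absC K (x : CGen K))) ∧
        ¬ ∃ ψ : CGen K →ₗ[CGen K] CGen K, ∀ x : I, ψ (x : CGen K) = φ x := by
  have he := orthogonalIdempotents_eS K pairwise_finite_branchSet_inter
  have hcompl (f : ℕ → Bool) : eS K (Set.range natPoint)ᶜ * eS K (branchSet f) = 0 := by
    rw [eS_mul_eS, (disjoint_compl_left.mono_right (branchSet_subset_range f)).inter_eq]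
    exact eS_eq_zero_of_finite K Set.finite_empty
  obtain ⟨T, hT⟩ := exists_notMem_range_fixedBranches K
  refine ⟨_, range_linearCombination_ne_top (eS_ne_zero K
    (accumulatesAtZero_compl_of_countable (Set.countable_range natPoint))) hcompl,
    he.indicatorMap T, fun x => ?_, fun ⟨ψ, hψ⟩ => hT ⟨ψ 1, ?_⟩⟩
  · obtain ⟨m, hm⟩ := x.2
    rw [he.indicatorMap_apply T x m hm.symm, linearCombination_indicator_eS K
      pairwise_finite_branchSet_inter, hm]
    exact absC_mul_eS_le K _ _
  · exact he.setOf_mul_eq_self_of_extends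
      (fun f => eS_ne_zero K (accumulatesAtZero_branchSet f)) hψ
end
end
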